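/- arXiv:2011.03506 — 6 statements merged into one kernel-verified Lean document; each statement's English description precedes it below -/
import Mathlib

section
/- (Proposition 1, policy-span direction: value equivalence extends to the pointwise span of the policies.) Let m and m̃ be models, let v : S → ℝ, and let π₁, …, π_n be policies with T_{m,π_i} v = T_{m̃,π_i} v for every i. Let π be a policy such that for every s ∈ S there exist real coefficients α₁, …, α_n with π s a = ∑_{i} α_i * π_i s a for all a ∈ A. Then T_{m,π} v = T_{m̃,π} v. -/
open Finset

/-- A model of an MDP: rewards and a transition kernel. -/
structure Model (S A : Type) [Fintype S] [Fintype A] where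
  r : S → A → ℝ
  p : S → A → S → ℝ
  p_nonneg : ∀ s a s', 0 ≤ p s a s'
  p_sum_one : ∀ s a, ∑ s', p s a s' = 1

/-- A (stochastic) policy. -/
structure Policy (S A : Type) [Fintype S] [Fintype A] where
  act : S → A → ℝ
  nonneg : ∀ s a, 0 ≤ act s a
  sum_one : ∀ s, ∑ a, act s a = 1

/-- The Bellman operator of model `m` under policy `π` with discount `γ`. -/
noncomputable def bellman {S A : Type} [Fintype S] [Fintype A]
    (γ : ℝ) (m : Model S A) (π : Policy S A) (v : S → ℝ) : S → ℝ :=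
  fun s => ∑ a, π.act s a * (m.r s a + γ * ∑ s', m.p s a s' * v s')


/-- **Proposition 1**, policy-span direction: value equivalence extends to the
pointwise span of the policies. -/
theorem valueEquiv_pointwise_span_policies {S A : Type} [Fintype S] [Fintype A]
    [Nonempty S] [Nonempty A]
    (γ : ℝ) (hγ0 : 0 ≤ γ) (hγ1 : γ < 1)
    (m mtil : Model S A) (v : S → ℝ) (n : ℕ) (πs : Fin n → Policy S A)
    (h : ∀ i, bellman γ m (πs i) v = bellman γ mtil (πs i) v)
    (π : Policy S A)
    (hπ : ∀ s, ∃ α : Fin n → ℝ, ∀ a, π.act s a = ∑ i, α i * (πs i).act s a) :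
    bellman γ m π v = bellman γ mtil π v := by
  funext s
  obtain ⟨α, hα⟩ := hπ s
  have key : ∀ (M : Model S A), bellman γ M π v s
      = ∑ i, α i * bellman γ M (πs i) v s := by
    intro M
    simp only [bellman, Finset.mul_sum]
    rw [Finset.sum_comm]
    refine Finset.sum_congr rfl fun a _ => ?_
    rw [hα a, Finset.sum_mul]
    exact Finset.sum_congr rfl fun i _ => by ring
  rw [key m, key mtil]
  exact Finset.sum_congr rfl fun i _ => by rw [h i]
end

section
/- (Proposition 2, dimension bound for the space of value-equivalent transition matrices.) Let S and A be finite nonempty types, and let P : Matrix (S × A) S ℝ. Let π₁, …, π_m be policies such that for every s ∈ S the m vectors (a ↦ π_i s a) in (A → ℝ) are linearly independent, and let v₁, …, v_k : S → ℝ be linearly independent. Then there exists a linear subspace W of Matrix (S × A) S ℝ with finrank ℝ W ≤ |S| * (|S| * |A| − m * k) such that every matrix P̃ : Matrix (S × A) S ℝ satisfying ∑_{a} π_i s a * ∑_{s'} (P̃ (s,a) s' − P (s,a) s') * v_j s' = 0 for all i ∈ {1,…,m}, j ∈ {1,…,k} and s ∈ S lies in the translate {P + w : w ∈ W}. (Note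 m ≤ |A| and k ≤ |S| follow from the independence hypotheses, so m * k ≤ |S| * |A|.) -/
/-!
Only the row block `s` of `P̃ - P` enters the constraints at `s`, through `Π_s (P̃ - P)_s Vᵀ = 0`,
where `Π_s` has the policies at `s` as rows and `V` has the `v_j` as rows. Both have full row
rank, hence right inverses, so `Q ↦ (Π_s Q_s Vᵀ)_s` maps the `|S||A| × |S|` matrices onto
`|S|`-tuples of `m × k` matrices. Its kernel contains `P̃ - P` and has dimension
`|S| (|S||A| - m k)`.
-/

open Finset Matrix

variable {K : Type*} [Field K]

theorem Matrix.exists_mul_eq_one_of_linearIndependent_row {m n : Type*} [Fintype m] [Fintype n]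
    [DecidableEq m] {M : Matrix m n K} (h : LinearIndependent K M.row) :
    ∃ B : Matrix n m K, M * B = 1 := by
  rw [← mulVec_surjective_iff_exists_right_inverse, ← coe_mulVecLin, ← LinearMap.range_eq_top]
  apply Submodule.eq_top_of_finrank_eq
  rw [← Matrix.rank, h.rank_matrix, Module.finrank_fintype_fun_eq_card]

theorem LinearMap.finrank_ker_of_surjective {V W : Type*} [AddCommGroup V] [Module K V]
    [AddCommGroup W] [Module K W] [FiniteDimensional K V] {f : V →ₗ[K] W}
    (hf : Function.Surjective f) :
    Module.finrank K (LinearMap.ker f) = Module.finrank K V - Module.finrank K W := by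
  rw [← f.finrank_range_add_finrank_ker, LinearMap.range_eq_top.2 hf, finrank_top]
  omega

section RowBlockSandwich

variable {S A σ ι κ : Type*} [Fintype A] [Fintype σ]

def rowBlockSandwich (M : S → Matrix ι A K) (N : Matrix σ κ K) :
    Matrix (S × A) σ K →ₗ[K] S → Matrix ι κ K where
  toFun Q s := M s * (Q.submatrix (Prod.mk s) id * N)
  map_add' Q R := by ext; simp [submatrix_add, Matrix.add_mul, Matrix.mul_add]
  map_smul' c Q := by ext; simp [submatrix_smul]

theorem rowBlockSandwich_surjective [Fintype ι] [Fintype κ] [DecidableEq ι] [DecidableEq κ]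
    {M : S → Matrix ι A K} {N : Matrix σ κ K} (hM : ∀ s, ∃ U : Matrix A ι K, M s * U = 1)
    (hN : ∃ V : Matrix κ σ K, V * N = 1) : Function.Surjective (rowBlockSandwich M N) := by
  choose U hU using hM
  obtain ⟨V, hV⟩ := hN
  intro C
  refine ⟨Matrix.of fun p t => (U p.1 * C p.1 * V) p.2 t, funext fun s => ?_⟩
  change M s * (U s * C s * V * N) = C s
  rw [Matrix.mul_assoc _ V, hV, Matrix.mul_one, ← Matrix.mul_assoc, hU, Matrix.one_mul]

theorem finrank_ker_rowBlockSandwich [Fintype S] [Fintype ι] [Fintype κ] [DecidableEq ι]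
    [DecidableEq κ] {M : S → Matrix ι A K} {N : Matrix σ κ K}
    (hM : ∀ s, ∃ U : Matrix A ι K, M s * U = 1)
    (hN : ∃ V : Matrix κ σ K, V * N = 1) :
    Module.finrank K (LinearMap.ker (rowBlockSandwich M N)) =
      Fintype.card S * (Fintype.card A * Fintype.card σ - Fintype.card ι * Fintype.card κ) := by
  rw [LinearMap.finrank_ker_of_surjective (rowBlockSandwich_surjective hM hN),
    Module.finrank_matrix, Module.finrank_pi_fintype, Module.finrank_matrix]
  simp [Fintype.card_prod, Nat.mul_sub, mul_assoc]

end RowBlockSandwich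

theorem dim_bound_valueEquiv_transition_matrices_general
    {S A : Type} [Fintype S] [Fintype A]
    (P : Matrix (S × A) S ℝ)
    (m k : ℕ) (πs : Fin m → S → A → ℝ)
    (hπ_indep : ∀ s : S, LinearIndependent ℝ (fun i : Fin m => (πs i s : A → ℝ)))
    (vs : Fin k → S → ℝ) (hv_indep : LinearIndependent ℝ vs) :
    ∃ W : Submodule ℝ (Matrix (S × A) S ℝ),
      Module.finrank ℝ W ≤
        Fintype.card S * (Fintype.card S * Fintype.card A - m * k) ∧
      ∀ Pt : Matrix (S × A) S ℝ,
        (∀ (i : Fin m) (j : Fin k) (s : S),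
          ∑ a, πs i s a * ∑ s', (Pt (s, a) s' - P (s, a) s') * vs j s' = 0) →
        ∃ w ∈ W, Pt = P + w := by
  have hπ_rightInv : ∀ s, ∃ U : Matrix A (Fin m) ℝ, Matrix.of (fun i a => πs i s a) * U = 1 := fun s =>
    exists_mul_eq_one_of_linearIndependent_row (hπ_indep s)
  have hv_leftInv : ∃ V : Matrix (Fin k) S ℝ, V * (Matrix.of vs)ᵀ = 1 := by
    obtain ⟨V, hV⟩ := exists_mul_eq_one_of_linearIndependent_row (M := Matrix.of vs) hv_indep
    exact ⟨Vᵀ, by rw [← transpose_mul, hV, transpose_one]⟩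
  refine ⟨LinearMap.ker (rowBlockSandwich _ _), (finrank_ker_rowBlockSandwich hπ_rightInv hv_leftInv).le.trans ?_,
    fun Pt hPt => ⟨Pt - P, ?_, by abel⟩⟩
  · simp [mul_comm]
  · ext s i j
    exact hPt i j s

/-- **Proposition 2**: dimension bound for the space of value-equivalent
transition matrices. -/
theorem dim_bound_valueEquiv_transition_matrices
    {S A : Type} [Fintype S] [Fintype A] [Nonempty S] [Nonempty A]
    (P : Matrix (S × A) S ℝ)
    (m k : ℕ) (πs : Fin m → S → A → ℝ)
    (hπ_nonneg : ∀ i s a, 0 ≤ πs i s a)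
    (hπ_sum : ∀ i s, ∑ a, πs i s a = 1)
    (hπ_indep : ∀ s : S, LinearIndependent ℝ (fun i : Fin m => (πs i s : A → ℝ)))
    (vs : Fin k → S → ℝ) (hv_indep : LinearIndependent ℝ vs) :
    ∃ W : Submodule ℝ (Matrix (S × A) S ℝ),
      Module.finrank ℝ W ≤
        Fintype.card S * (Fintype.card S * Fintype.card A - m * k) ∧
      ∀ Pt : Matrix (S × A) S ℝ,
        (∀ (i : Fin m) (j : Fin k) (s : S),
          ∑ a, πs i s a * ∑ s', (Pt (s, a) s' - P (s, a) s') * vs j s' = 0) →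
        ∃ w ∈ W, Pt = P + w :=
  dim_bound_valueEquiv_transition_matrices_general P m k πs hπ_indep vs hv_indep
end

section
/- (Lemma 1, dimension of the annihilator space of a two-sided matrix product.) Let k, n, m, l be natural numbers and let A : Matrix (Fin k) (Fin n) ℝ and C : Matrix (Fin m) (Fin l) ℝ. Then the set B = { B : Matrix (Fin n) (Fin m) ℝ | A * B * C = 0 } is a linear subspace of Matrix (Fin n) (Fin m) ℝ, and its dimension satisfies finrank ℝ B = n * m − (rank A) * (rank C). -/
/-- **Lemma 1**: the annihilator space `{B | A * B * C = 0}` is a linear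
subspace of dimension `n * m - rank A * rank C`. -/
theorem finrank_annihilator_matrix_product
    (k n m l : ℕ) (A : Matrix (Fin k) (Fin n) ℝ) (C : Matrix (Fin m) (Fin l) ℝ) :
    ∃ B : Submodule ℝ (Matrix (Fin n) (Fin m) ℝ),
      (B : Set (Matrix (Fin n) (Fin m) ℝ)) = {X | A * X * C = 0} ∧
      Module.finrank ℝ B = n * m - A.rank * C.rank := by
  classical
  set W : Submodule ℝ (Fin m → ℝ) := LinearMap.range C.mulVecLin with hW
  set U : Submodule ℝ (Fin n → ℝ) := LinearMap.ker A.mulVecLin with hU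
  -- restriction map
  let R : ((Fin m → ℝ) →ₗ[ℝ] (Fin n → ℝ)) →ₗ[ℝ] (W →ₗ[ℝ] ((Fin n → ℝ) ⧸ U)) :=
    { toFun := fun f => (U.mkQ.comp f).comp W.subtype
      map_add' := by intro f g; ext x; simp
      map_smul' := by intro c f; ext x; simp }
  have hRapp : ∀ f w, R f w = U.mkQ (f w) := fun _ _ => rfl
  -- surjectivity of R
  have hRsurj : Function.Surjective R := by
    intro g
    obtain ⟨σ, hσ⟩ := U.mkQ.exists_rightInverse_of_surjective
      (LinearMap.range_eq_top.2 U.mkQ_surjective)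
    obtain ⟨W', hW'⟩ := W.exists_isCompl
    refine ⟨(σ.comp g).comp (W.linearProjOfIsCompl W' hW'), ?_⟩
    ext w
    have h1 : W.linearProjOfIsCompl W' hW' (w : Fin m → ℝ) = w :=
      Submodule.linearProjOfIsCompl_apply_left hW' w
    have h2 : U.mkQ (σ (g w)) = g w := congrFun (congrArg DFunLike.coe hσ) (g w)
    simp [hRapp, h1, h2]
  -- dimensions
  have hrankA : A.rank + Module.finrank ℝ U = n := by
    have := LinearMap.finrank_range_add_finrank_ker A.mulVecLin
    simpa [Matrix.rank, hU, Module.finrank_fintype_fun_eq_card] using this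
  have hQ : Module.finrank ℝ ((Fin n → ℝ) ⧸ U) + Module.finrank ℝ U = n := by
    have := Submodule.finrank_quotient_add_finrank U
    simpa [Module.finrank_fintype_fun_eq_card] using this
  have hQ' : Module.finrank ℝ ((Fin n → ℝ) ⧸ U) = A.rank := by omega
  have hWrank : Module.finrank ℝ W = C.rank := rfl
  have hdom : Module.finrank ℝ ((Fin m → ℝ) →ₗ[ℝ] (Fin n → ℝ)) = m * n := by
    simp [Module.finrank_linearMap, Module.finrank_fintype_fun_eq_card]
  have htarget : Module.finrank ℝ (W →ₗ[ℝ] ((Fin n → ℝ) ⧸ U)) = C.rank * A.rank := by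
    rw [Module.finrank_linearMap, hWrank, hQ']
  have hker : Module.finrank ℝ (LinearMap.ker R) = n * m - A.rank * C.rank := by
    have h := LinearMap.finrank_range_add_finrank_ker R
    rw [LinearMap.range_eq_top.2 hRsurj, finrank_top] at h
    rw [hdom, htarget] at h
    rw [Nat.mul_comm m n, Nat.mul_comm C.rank A.rank] at h
    have hle : A.rank * C.rank ≤ n * m :=
      Nat.mul_le_mul (Matrix.rank_le_width A) (Matrix.rank_le_height C)
    omega
  -- the submodule of matrices
  let e : Matrix (Fin n) (Fin m) ℝ ≃ₗ[ℝ] ((Fin m → ℝ) →ₗ[ℝ] (Fin n → ℝ)) := Matrix.toLin'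
  have hmem : ∀ X, X ∈ (LinearMap.ker R).map (e.symm : _ →ₗ[ℝ] _) ↔ e X ∈ LinearMap.ker R := by
    intro X
    rw [Submodule.mem_map]
    constructor
    · rintro ⟨Y, hY, rfl⟩
      simpa using hY
    · intro h
      exact ⟨e X, h, e.symm_apply_apply X⟩
  refine ⟨(LinearMap.ker R).map (e.symm : _ →ₗ[ℝ] _), ?_, ?_⟩
  · ext X
    simp only [SetLike.mem_coe, Set.mem_setOf_eq]
    rw [hmem X]
    constructor
    · intro h
      have h' : ∀ w : W, U.mkQ (e X w) = 0 := fun w => by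
        have := congrFun (congrArg DFunLike.coe (LinearMap.mem_ker.1 h)) w
        simpa [hRapp] using this
      -- show A * X * C = 0
      ext i j
      have hw : C.mulVecLin (Pi.single j 1) ∈ W := ⟨Pi.single j 1, rfl⟩
      have := h' ⟨_, hw⟩
      rw [Submodule.mkQ_apply, Submodule.Quotient.mk_eq_zero, hU, LinearMap.mem_ker] at this
      have hXv : e X (C.mulVecLin (Pi.single j 1)) = X.mulVec (C.mulVec (Pi.single j 1)) := by
        simp [e, Matrix.toLin'_apply, Matrix.mulVecLin_apply]
      rw [hXv] at this
      have : (A * X * C).mulVec (Pi.single j 1) = 0 := by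
        rw [← Matrix.mulVec_mulVec, ← Matrix.mulVec_mulVec]
        simpa [Matrix.mulVecLin_apply] using this
      have := congrFun this i
      simpa [Matrix.mulVec_single] using this
    · intro h
      rw [LinearMap.mem_ker]
      ext w
      obtain ⟨v, hv⟩ := w.2
      have : A.mulVec (X.mulVec (C.mulVec v)) = 0 := by
        have := congrFun (congrArg Matrix.mulVec h) v
        rw [← Matrix.mulVec_mulVec, ← Matrix.mulVec_mulVec] at this
        simpa using this
      have hXw : e X (w : Fin m → ℝ) = X.mulVec (C.mulVec v) := by
        rw [← hv]; simp [e, Matrix.toLin'_apply, Matrix.mulVecLin_apply]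
      simp only [hRapp, LinearMap.zero_apply, Submodule.mkQ_apply,
        Submodule.Quotient.mk_eq_zero, hU, LinearMap.mem_ker, Matrix.mulVecLin_apply, hXw]
      simpa using this
  · rw [LinearEquiv.finrank_map_eq e.symm, hker]
end

section
/- (Existence of an exact value-equivalent model in the one-parameter-per-row family, part of the proof of Proposition 3.) Let n ≥ 2, let P : Matrix (Fin n) (Fin n) ℝ have nonnegative entries with each row summing to 1, and fix i : Fin n. For θ : Fin n → ℝ define the matrix P_θ by (P_θ) j j = θ j and (P_θ) j l = (1 − θ j) / (n − 1) for l ≠ j. Suppose P j i ≤ 1 / (n − 1) for every j ≠ i. Then, setting θ i = P i i and θ j = 1 − (n − 1) * P j i for j ≠ i, one has 0 ≤ θ j ≤ 1 for every j, and P_θ.mulVec e_i = P.mulVec e_i, where e_i : Fin n → ℝ is the standard basis vector with (e_i) i = 1 and (e_i) l = 0 for l ≠ i. -/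
open Finset

/-- The one-parameter-per-row transition matrix: row `j` puts mass `θ j` on
`j` and spreads the rest uniformly over the other `n - 1` states. -/
noncomputable def rowParamMatrix (n : ℕ) (θ : Fin n → ℝ) :
    Matrix (Fin n) (Fin n) ℝ :=
  fun j l => if l = j then θ j else (1 - θ j) / ((n : ℝ) - 1)

def stdBasisVec (n : ℕ) (i : Fin n) : Fin n → ℝ :=
  fun l => if l = i then 1 else 0

theorem stdBasisVec_eq_single (n : ℕ) (i : Fin n) : stdBasisVec n i = Pi.single i 1 := by
  ext l
  simp [stdBasisVec, Pi.single_apply]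

theorem mulVec_stdBasisVec {m : Type*} {n : ℕ} (M : Matrix m (Fin n) ℝ) (i : Fin n) :
    M.mulVec (stdBasisVec n i) = M.col i := by
  rw [stdBasisVec_eq_single, Matrix.mulVec_single_one]

section rowParamMatrix

variable {n : ℕ} (θ : Fin n → ℝ)

theorem rowParamMatrix_apply_self (j : Fin n) : rowParamMatrix n θ j j = θ j :=
  if_pos rfl

theorem rowParamMatrix_apply_of_ne {j l : Fin n} (h : l ≠ j) :
    rowParamMatrix n θ j l = (1 - θ j) / ((n : ℝ) - 1) :=
  if_neg h

variable {θ}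

theorem one_lt_natCast_of_ne {i j : Fin n} (h : j ≠ i) : (1 : ℝ) < n := by
  have : Nontrivial (Fin n) := ⟨⟨j, i, h⟩⟩
  exact_mod_cast Fintype.card_fin n ▸ Fintype.one_lt_card

theorem rowParamMatrix_apply_of_ne_of_eq {i j : Fin n} (h : j ≠ i) {p : ℝ}
    (hθ : θ j = 1 - ((n : ℝ) - 1) * p) : rowParamMatrix n θ j i = p := by
  have hn : (n : ℝ) - 1 ≠ 0 := (sub_pos.2 (one_lt_natCast_of_ne h)).ne'
  rw [rowParamMatrix_apply_of_ne θ h.symm, hθ, sub_sub_cancel, mul_div_cancel_left₀ p hn]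

end rowParamMatrix

theorem one_sub_mul_mem_Icc {a p : ℝ} (ha : 0 < a) (hp0 : 0 ≤ p) (hp : p ≤ 1 / a) :
    1 - a * p ∈ Set.Icc 0 1 := by
  have hap : a * p ≤ 1 := by rwa [le_div_iff₀' ha] at hp
  constructor <;> nlinarith

theorem exact_value_equivalent_row_param_model_general
    (n : ℕ) (P : Matrix (Fin n) (Fin n) ℝ)
    (hP0 : ∀ j l, 0 ≤ P j l) (hP1 : ∀ j, ∑ l, P j l = 1) (i : Fin n)
    (hcol : ∀ j, j ≠ i → P j i ≤ 1 / ((n : ℝ) - 1)) :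
    ∀ θ : Fin n → ℝ,
      (θ i = P i i) → (∀ j, j ≠ i → θ j = 1 - ((n : ℝ) - 1) * P j i) →
      (∀ j, 0 ≤ θ j ∧ θ j ≤ 1) ∧
      (rowParamMatrix n θ).mulVec (stdBasisVec n i) = P.mulVec (stdBasisVec n i) := by
  intro θ hθi hθj
  have hP : P ∈ Matrix.rowStochastic ℝ (Fin n) := Matrix.mem_rowStochastic_iff_sum.2 ⟨hP0, hP1⟩
  refine ⟨fun j => ?_, ?_⟩
  · obtain rfl | hj := eq_or_ne j i
    · rw [hθi]
      exact ⟨hP0 j j, Matrix.le_one_of_mem_rowStochastic hP⟩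
    · rw [hθj j hj]
      exact one_sub_mul_mem_Icc (sub_pos.2 (one_lt_natCast_of_ne hj)) (hP0 j i)
        (hcol j hj)
  · ext j
    rw [mulVec_stdBasisVec, mulVec_stdBasisVec, Matrix.col_apply, Matrix.col_apply]
    obtain rfl | hj := eq_or_ne j i
    · exact (rowParamMatrix_apply_self θ j).trans hθi
    · exact rowParamMatrix_apply_of_ne_of_eq hj (hθj j hj)

/-- Existence of an exact value-equivalent model in the one-parameter-per-row
family (part of the proof of Proposition 3). -/
theorem exact_value_equivalent_row_param_model
    (n : ℕ) (hn : 2 ≤ n) (P : Matrix (Fin n) (Fin n) ℝ)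
    (hP0 : ∀ j l, 0 ≤ P j l) (hP1 : ∀ j, ∑ l, P j l = 1) (i : Fin n)
    (hcol : ∀ j, j ≠ i → P j i ≤ 1 / ((n : ℝ) - 1)) :
    ∀ θ : Fin n → ℝ,
      (θ i = P i i) → (∀ j, j ≠ i → θ j = 1 - ((n : ℝ) - 1) * P j i) →
      (∀ j, 0 ≤ θ j ∧ θ j ≤ 1) ∧
      (rowParamMatrix n θ).mulVec (stdBasisVec n i) = P.mulVec (stdBasisVec n i) :=
  exact_value_equivalent_row_param_model_general n P hP0 hP1 i hcol
end

section
/- (Proposition 3, the maximum-likelihood model need not be value equivalent even when an exactly value-equivalent model exists in the model class.) There exist a natural number n ≥ 3, a matrix P : Matrix (Fin n) (Fin n) ℝ with nonnegative entries and each row summing to 1, an index i : Fin n, and parameters θ : Fin n → ℝ with 0 ≤ θ j ≤ 1 for all j, such that P_θ.mulVec e_i = P.mulVec e_i, while the maximum-likelihood parameters θ* defined by θ* j = P j j satisfy P_{θ*}.mulVec e_i ≠ P.mulVec e_i. Here, for θ : Fin n → ℝ, P_θ denotes the matrix with (P_θ) j j = θ j and (P_θ) j l = (1 − θ j) / (n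 − 1) for l ≠ j, and e_i : Fin n → ℝ is the standard basis vector at i. -/
open Finset

/-- **Proposition 3**: the maximum-likelihood model need not be value
equivalent even when an exactly value-equivalent model exists in the model
class. -/
theorem mle_not_value_equivalent :
    ∃ (n : ℕ) (_ : 3 ≤ n) (P : Matrix (Fin n) (Fin n) ℝ) (i : Fin n)
      (θ : Fin n → ℝ),
      (∀ j l, 0 ≤ P j l) ∧ (∀ j, ∑ l, P j l = 1) ∧
      (∀ j, 0 ≤ θ j ∧ θ j ≤ 1) ∧
      (rowParamMatrix n θ).mulVec (stdBasisVec n i) =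
        P.mulVec (stdBasisVec n i) ∧
      (rowParamMatrix n (fun j => P j j)).mulVec (stdBasisVec n i) ≠
        P.mulVec (stdBasisVec n i) := by
  refine ⟨3, le_refl 3, !![1/3, 1/3, 1/3; 1/2, 1/2, 0; 1/2, 0, 1/2], 0,
    ![1/3, 0, 0], ?_, ?_, ?_, ?_, ?_⟩
  · intro j l
    fin_cases j <;> fin_cases l <;> norm_num
  · intro j
    fin_cases j <;> simp [Fin.sum_univ_three] <;> norm_num
  · intro j
    fin_cases j <;> norm_num
  · funext j
    fin_cases j <;>
      simp [Matrix.mulVec, dotProduct, Fin.sum_univ_three, rowParamMatrix,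
        stdBasisVec, Matrix.vecHead, Matrix.vecTail] <;> norm_num
  · intro h
    have := congrFun h 1
    simp [Matrix.mulVec, dotProduct, Fin.sum_univ_three, rowParamMatrix,
      stdBasisVec, Matrix.vecHead, Matrix.vecTail] at this
    norm_num at this
end

section
/- (Proposition 4, value-equivalent models yield the same value-iteration trajectory on a Bellman-closed set of functions.) Let m = (r, p) and m̃ = (r̃, p̃) be models with A finite and nonempty. Let V' be a set of functions S → ℝ such that v ∈ V' implies T_{m,π} v ∈ V' for every policy π. Assume T_{m,π} v = T_{m̃,π} v for every policy π and every v ∈ V'. Let T and T̃ denote the Bellman optimality operators of m and m̃, given by (T v)(s) = max_{a ∈ A} (r s a + γ * ∑_{s'} p s a s' * v s') and analogously for T̃. Then for every v' ∈ V' and every n ∈ ℕ, the n-fold iterate T^[n] v' lies in V' and T̃^[n] v' = T^[n] v'. -/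
open Finset

/-- The Bellman optimality operator of a model. -/
noncomputable def bellmanOpt {S A : Type} [Fintype S] [Fintype A] [Nonempty A]
    (γ : ℝ) (m : Model S A) (v : S → ℝ) : S → ℝ :=
  fun s => Finset.univ.sup' Finset.univ_nonempty
    (fun a => m.r s a + γ * ∑ s', m.p s a s' * v s')

theorem Set.EqOn.iterate {α : Type*} {f g : α → α} {s : Set α} (hfg : Set.EqOn f g s)
    (hf : Set.MapsTo f s s) (n : ℕ) : Set.EqOn f^[n] g^[n] s := by
  induction n with
  | zero => exact fun _ _ => rfl
  | succ n ih =>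
    intro x hx
    rw [Function.iterate_succ_apply', Function.iterate_succ_apply', ← ih hx,
      hfg (hf.iterate n hx)]

section Bellman

variable {S A : Type} [Fintype S] [Fintype A]

noncomputable def qValue (γ : ℝ) (m : Model S A) (v : S → ℝ) (s : S) (a : A) : ℝ :=
  m.r s a + γ * ∑ s', m.p s a s' * v s'

theorem bellmanOpt_apply [Nonempty A] (γ : ℝ) (m : Model S A) (v : S → ℝ) (s : S) :
    bellmanOpt γ m v s = univ.sup' univ_nonempty (qValue γ m v s) :=
  rfl

noncomputable def detPolicy [DecidableEq A] (f : S → A) : Policy S A where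
  act s a := if a = f s then 1 else 0
  nonneg s a := by split <;> norm_num
  sum_one s := by simp

theorem bellman_detPolicy [DecidableEq A] (γ : ℝ) (m : Model S A) (f : S → A) (v : S → ℝ)
    (s : S) : bellman γ m (detPolicy f) v s = qValue γ m v s (f s) := by
  simp [bellman, detPolicy, qValue]

/-- Testing against the constant deterministic policies recovers every Q-value. -/
theorem qValue_eq_of_bellman_eq {γ : ℝ} {m m' : Model S A} {v : S → ℝ}
    (h : ∀ π : Policy S A, bellman γ m π v = bellman γ m' π v) :
    qValue γ m v = qValue γ m' v := by
  classical
  funext s a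
  simpa only [bellman_detPolicy] using congrFun (h (detPolicy fun _ => a)) s

theorem bellmanOpt_eq_of_bellman_eq [Nonempty A] {γ : ℝ} {m m' : Model S A} {v : S → ℝ}
    (h : ∀ π : Policy S A, bellman γ m π v = bellman γ m' π v) :
    bellmanOpt γ m v = bellmanOpt γ m' v := by
  funext s
  rw [bellmanOpt_apply, bellmanOpt_apply, qValue_eq_of_bellman_eq h]

/-- The optimality operator is the Bellman operator of a greedy policy. -/
theorem exists_bellman_eq_bellmanOpt [Nonempty A] (γ : ℝ) (m : Model S A) (v : S → ℝ) :
    ∃ π : Policy S A, bellman γ m π v = bellmanOpt γ m v := by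
  classical
  have greedy (s : S) : ∃ a, bellmanOpt γ m v s = qValue γ m v s a := by
    obtain ⟨a, -, ha⟩ := exists_mem_eq_sup' univ_nonempty (qValue γ m v s)
    exact ⟨a, ha⟩
  choose f hf using greedy
  exact ⟨detPolicy f, funext fun s => by rw [bellman_detPolicy, hf]⟩

end Bellman

theorem valueEquiv_same_value_iteration_general {S A : Type} [Fintype S] [Fintype A]
    [Nonempty A]
    (γ : ℝ)
    (m mtil : Model S A) (V' : Set (S → ℝ))
    (hclosed : ∀ v ∈ V', ∀ π : Policy S A, bellman γ m π v ∈ V')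
    (hve : ∀ π : Policy S A, ∀ v ∈ V', bellman γ m π v = bellman γ mtil π v) :
    ∀ v' ∈ V', ∀ n : ℕ,
      (bellmanOpt γ m)^[n] v' ∈ V' ∧
      (bellmanOpt γ mtil)^[n] v' = (bellmanOpt γ m)^[n] v' := by
  have hmaps : Set.MapsTo (bellmanOpt γ m) V' V' := fun v hv => by
    obtain ⟨π, hπ⟩ := exists_bellman_eq_bellmanOpt γ m v
    exact hπ ▸ hclosed v hv π
  have heq : Set.EqOn (bellmanOpt γ m) (bellmanOpt γ mtil) V' := fun v hv =>
    bellmanOpt_eq_of_bellman_eq fun π => hve π v hv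
  intro v' hv' n
  exact ⟨hmaps.iterate n hv', (heq.iterate hmaps n hv').symm⟩

/-- **Proposition 4**: value-equivalent models yield the same value-iteration
trajectory on a Bellman-closed set of functions. -/
theorem valueEquiv_same_value_iteration {S A : Type} [Fintype S] [Fintype A]
    [Nonempty S] [Nonempty A]
    (γ : ℝ) (hγ0 : 0 ≤ γ) (hγ1 : γ < 1)
    (m mtil : Model S A) (V' : Set (S → ℝ))
    (hclosed : ∀ v ∈ V', ∀ π : Policy S A, bellman γ m π v ∈ V')
    (hve : ∀ π : Policy S A, ∀ v ∈ V', bellman γ m π v = bellman γ mtil π v) :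
    ∀ v' ∈ V', ∀ n : ℕ,
      (bellmanOpt γ m)^[n] v' ∈ V' ∧
      (bellmanOpt γ mtil)^[n] v' = (bellmanOpt γ m)^[n] v' :=
  valueEquiv_same_value_iteration_general γ m mtil V' hclosed hve
end
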